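/- (Existence and uniqueness of the Cauchy Δ-antiderivative.) For every rd-continuous function u : 𝕋 → ℝ^n there exists a unique function U : 𝕋 → ℝ^n with U(a) = 0 that is Δ-differentiable at every t ∈ 𝕋^κ with U^Δ(t) = u(t). -/

import Mathlib

open Set Filter Topology

/-- Forward jump operator of the time scale `T` (with `b = sSup T`). -/
noncomputable def tsSigma (T : Set ℝ) (t : ℝ) : ℝ :=
  if t < sSup T then sInf {s | s ∈ T ∧ t < s} else sSup T

/-- Backward jump operator of the time scale `T` (with `a = sInf T`). -/
noncomputable def tsRho (T : Set ℝ) (t : ℝ) : ℝ :=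
  if sInf T < t then sSup {s | s ∈ T ∧ s < t} else sInf T

/-- `𝕋^κ = 𝕋 \ (ρ(b), b]`. -/
def tsK (T : Set ℝ) : Set ℝ := T \ Ioc (tsRho T (sSup T)) (sSup T)

/-- `𝕋_κ = 𝕋 \ [a, σ(a))`. -/
def tsKd (T : Set ℝ) : Set ℝ := T \ Ico (sInf T) (tsSigma T (sInf T))

/-- `𝕋^κ_κ = 𝕋^κ ∩ 𝕋_κ`. -/
def tsKK (T : Set ℝ) : Set ℝ := tsK T ∩ tsKd T

/-- `u` is Δ-differentiable at `t` with Δ-derivative `L`. -/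
def HasDeltaDerivAt {E : Type*} [NormedAddCommGroup E] [NormedSpace ℝ E]
    (T : Set ℝ) (u : ℝ → E) (t : ℝ) (L : E) : Prop :=
  Tendsto (fun s => (tsSigma T t - s)⁻¹ • (u (tsSigma T t) - u s))
    (𝓝[T \ {tsSigma T t}] t) (𝓝 L)

/-- `u` is ∇-differentiable at `t` with ∇-derivative `L`. -/
def HasNablaDerivAt {E : Type*} [NormedAddCommGroup E] [NormedSpace ℝ E]
    (T : Set ℝ) (u : ℝ → E) (t : ℝ) (L : E) : Prop :=
  Tendsto (fun s => (s - tsRho T t)⁻¹ • (u s - u (tsRho T t)))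
    (𝓝[T \ {tsRho T t}] t) (𝓝 L)

/-- `u` is rd-continuous on the time scale `T`. -/
def RdContinuous {E : Type*} [NormedAddCommGroup E] [NormedSpace ℝ E]
    (T : Set ℝ) (u : ℝ → E) : Prop :=
  (∀ t ∈ T, tsSigma T t = t → ContinuousWithinAt u T t) ∧
  (∀ t ∈ T, tsRho T t = t → ∃ L : E, Tendsto u (𝓝[T ∩ Iio t] t) (𝓝 L))

/-- `u` is ld-continuous on the time scale `T`. -/
def LdContinuous {E : Type*} [NormedAddCommGroup E] [NormedSpace ℝ E]
    (T : Set ℝ) (u : ℝ → E) : Prop :=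
  (∀ t ∈ T, tsRho T t = t → ContinuousWithinAt u T t) ∧
  (∀ t ∈ T, tsSigma T t = t → ∃ L : E, Tendsto u (𝓝[T ∩ Ioi t] t) (𝓝 L))

/-! The Cauchy Δ-antiderivative is the Lebesgue primitive `t ↦ ∫_a^t u ⌊s⌋ ds`, where
`⌊s⌋ = tsFloor T s` is the largest point of `𝕋` not exceeding `s` (and `a` for `s < a`), so that
`u ∘ ⌊·⌋` extends `u` by constants on every gap `[t, σ t)`. This extension is bounded
(rd-continuity and compactness) and continuous outside the countable set of points of `𝕋` isolated
on one side, hence integrable on bounded intervals. At a right-scattered point the Δ-quotient is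
the mean of `u ∘ ⌊·⌋` over the gap, i.e. `u t`; at a right-dense point it tends to `u t` by
continuity of `u`. Uniqueness follows from the induction principle for time scales, applied to
`‖W t‖ ≤ ε (t - a)` for the difference `W` of two antiderivatives. -/

open MeasureTheory

section JumpOperators

variable {T : Set ℝ} {t y : ℝ}

theorem tsSigma_le_of_lt (hbdd : Bornology.IsBounded T) (hy : y ∈ T) (hty : t < y) :
    tsSigma T t ≤ y := by
  rw [tsSigma, if_pos (hty.trans_le (le_csSup hbdd.bddAbove hy))]
  exact csInf_le (hbdd.bddBelow.mono fun _ hs => hs.1) ⟨hy, hty⟩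

theorem le_tsSigma (hclosed : IsClosed T) (hbdd : Bornology.IsBounded T) (ht : t ∈ T) :
    t ≤ tsSigma T t := by
  unfold tsSigma
  split_ifs with htb
  · exact le_csInf ⟨_, hclosed.csSup_mem ⟨t, ht⟩ hbdd.bddAbove, htb⟩ fun _ hs => hs.2.le
  · exact le_csSup hbdd.bddAbove ht

theorem tsSigma_mem (hclosed : IsClosed T) (hbdd : Bornology.IsBounded T) (hne : T.Nonempty) :
    tsSigma T t ∈ T := by
  have hb := hclosed.csSup_mem hne hbdd.bddAbove
  unfold tsSigma
  split_ifs with htb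
  · exact hclosed.closure_subset_iff.2 (fun _ hs => hs.1) <|
      csInf_mem_closure ⟨_, hb, htb⟩ (hbdd.bddBelow.mono fun _ hs => hs.1)
  · exact hb

theorem lt_sSup_of_lt_tsSigma (h : t < tsSigma T t) : t < sSup T := by
  by_contra htb
  rw [tsSigma, if_neg htb] at h
  exact htb h

theorem exists_mem_Ioo_of_tsSigma_eq (hclosed : IsClosed T) (hbdd : Bornology.IsBounded T)
    (ht : t ∈ T) (htb : t < sSup T) (hσ : tsSigma T t = t) (hty : t < y) :
    ∃ s ∈ T, t < s ∧ s < y := by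
  rw [tsSigma, if_pos htb] at hσ
  obtain ⟨s, hs, hsy⟩ := exists_lt_of_csInf_lt (s := {s | s ∈ T ∧ t < s})
    ⟨_, hclosed.csSup_mem ⟨t, ht⟩ hbdd.bddAbove, htb⟩ (hσ.symm ▸ hty)
  exact ⟨s, hs.1, hs.2, hsy⟩

theorem le_tsRho (hbdd : Bornology.IsBounded T) (hy : y ∈ T) (hyt : y < t) : y ≤ tsRho T t := by
  rw [tsRho, if_pos ((csInf_le hbdd.bddBelow hy).trans_lt hyt)]
  exact le_csSup (hbdd.bddAbove.mono fun _ hs => hs.1) ⟨hy, hyt⟩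

theorem tsRho_le (hbdd : Bornology.IsBounded T) (ht : t ∈ T) : tsRho T t ≤ t := by
  unfold tsRho
  split_ifs with hat
  · obtain ⟨s, hs, hst⟩ := exists_lt_of_csInf_lt ⟨t, ht⟩ hat
    exact csSup_le ⟨s, hs, hst⟩ fun _ hs => hs.2.le
  · exact csInf_le hbdd.bddBelow ht

theorem mem_tsK_of_lt (hbdd : Bornology.IsBounded T) (ht : t ∈ T) (htb : t < sSup T) :
    t ∈ tsK T :=
  ⟨ht, fun h => (le_tsRho hbdd ht htb).not_gt h.1⟩

theorem mem_tsK_of_mem_closure (hbdd : Bornology.IsBounded T) (ht : t ∈ T)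
    (hcl : t ∈ closure (T ∩ Iio t)) : t ∈ tsK T := by
  refine ⟨ht, fun h => ?_⟩
  have : closure (T ∩ Iio t) ⊆ Iic (tsRho T (sSup T)) :=
    closure_minimal (fun s hs => le_tsRho hbdd hs.1 (hs.2.trans_le h.2)) isClosed_Iic
  exact (this hcl).not_gt h.1

end JumpOperators

section DeltaDerivative

variable {E : Type*} [NormedAddCommGroup E] [NormedSpace ℝ E] {T : Set ℝ} {V W : ℝ → E} {t : ℝ}
  {L L' : E}

theorem hasDeltaDerivAt_iff_tendsto_slope :
    HasDeltaDerivAt T W t L ↔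
      Tendsto (fun s => slope W s (tsSigma T t)) (𝓝[T \ {tsSigma T t}] t) (𝓝 L) := by
  simp only [HasDeltaDerivAt, slope_def_module]

theorem HasDeltaDerivAt.sub (hV : HasDeltaDerivAt T V t L) (hW : HasDeltaDerivAt T W t L') :
    HasDeltaDerivAt T (V - W) t (L - L') := by
  rw [hasDeltaDerivAt_iff_tendsto_slope] at *
  simpa only [slope_def_module, Pi.sub_apply, sub_sub_sub_comm, smul_sub] using hV.sub hW

theorem HasDeltaDerivAt.slope_eq (h : HasDeltaDerivAt T W t L) (ht : t ∈ T)
    (hσ : t < tsSigma T t) : slope W t (tsSigma T t) = L :=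
  tendsto_nhds_unique (tendsto_pure_nhds _ t)
    ((hasDeltaDerivAt_iff_tendsto_slope.1 h).mono_left (pure_le_nhdsWithin ⟨ht, hσ.ne⟩))

theorem HasDeltaDerivAt.continuousWithinAt (h : HasDeltaDerivAt T W t L) (hclosed : IsClosed T)
    (hbdd : Bornology.IsBounded T) (ht : t ∈ T) : ContinuousWithinAt W T t := by
  have hWt : W (tsSigma T t) - (tsSigma T t - t) • L = W t := by
    rcases (le_tsSigma hclosed hbdd ht).eq_or_lt with hσ | hσ
    · rw [← hσ, sub_self, zero_smul, sub_zero]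
    · rw [← h.slope_eq ht hσ, sub_smul_slope, vsub_eq_sub, sub_sub_cancel]
  have hlim : Tendsto (fun s => W (tsSigma T t) - (tsSigma T t - s) • slope W s (tsSigma T t))
      (𝓝[T \ {tsSigma T t}] t) (𝓝 (W t)) := by
    rw [← hWt]
    exact tendsto_const_nhds.sub <| Tendsto.smul (continuous_sub_left _).continuousWithinAt
      (hasDeltaDerivAt_iff_tendsto_slope.1 h)
  rw [← continuousWithinAt_sdiff_singleton (y := tsSigma T t)]
  refine hlim.congr fun s => ?_
  rw [sub_smul_slope, vsub_eq_sub, sub_sub_cancel]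

end DeltaDerivative

noncomputable def tsFloor (T : Set ℝ) (r : ℝ) : ℝ := sSup (insert (sInf T) (T ∩ Iic r))

section Floor

variable {T : Set ℝ} {r s t z : ℝ}

theorem tsFloor_mem (hclosed : IsClosed T) (hbdd : Bornology.IsBounded T) (hne : T.Nonempty)
    (r : ℝ) : tsFloor T r ∈ T := by
  have hsub := insert_subset (hclosed.csInf_mem hne hbdd.bddBelow) (inter_subset_left (t := Iic r))
  have hcl : IsClosed (insert (sInf T) (T ∩ Iic r)) := by
    simpa only [insert_eq] using isClosed_singleton.union (hclosed.inter isClosed_Iic)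
  exact hsub <| hcl.csSup_mem (insert_nonempty _ _) (hbdd.bddAbove.mono hsub)

theorem le_tsFloor (hbdd : Bornology.IsBounded T) (ht : t ∈ T) (htr : t ≤ r) : t ≤ tsFloor T r :=
  le_csSup (bddAbove_insert.2 (hbdd.bddAbove.mono inter_subset_left))
    (mem_insert_of_mem _ ⟨ht, htr⟩)

theorem tsFloor_le (har : sInf T ≤ r) : tsFloor T r ≤ r :=
  csSup_le (insert_nonempty _ _) fun _ hx => hx.elim (· ▸ har) fun h => h.2

theorem tsFloor_of_mem (hbdd : Bornology.IsBounded T) (ht : t ∈ T) : tsFloor T t = t :=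
  (tsFloor_le (csInf_le hbdd.bddBelow ht)).antisymm (le_tsFloor hbdd ht le_rfl)

theorem tsFloor_eq_of_mem_Ico (hclosed : IsClosed T) (hbdd : Bornology.IsBounded T) (ht : t ∈ T)
    (hr : r ∈ Ico t (tsSigma T t)) : tsFloor T r = t := by
  refine le_antisymm (not_lt.1 fun hlt => ?_) (le_tsFloor hbdd ht hr.1)
  have hσ := tsSigma_le_of_lt hbdd (tsFloor_mem hclosed hbdd ⟨t, ht⟩ r) hlt
  exact (hσ.trans (tsFloor_le ((csInf_le hbdd.bddBelow ht).trans hr.1))).not_gt hr.2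

theorem tsFloor_mem_uIcc (hbdd : Bornology.IsBounded T) (hs : s ∈ T) (ht : t ∈ T)
    (hz : z ∈ uIcc s t) : tsFloor T z ∈ uIcc s t := by
  have hmin : min s t ∈ T := by rcases min_choice s t with h | h <;> rw [h] <;> assumption
  exact ⟨le_tsFloor hbdd hmin hz.1,
    (tsFloor_le ((csInf_le hbdd.bddBelow hmin).trans hz.1)).trans hz.2⟩

theorem tsFloor_eventuallyEq (hclosed : IsClosed T) (hr : r ∉ T) :
    tsFloor T =ᶠ[𝓝 r] fun _ => tsFloor T r := by
  obtain ⟨l, h, ⟨hl, hh⟩, hgap⟩ :=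
    mem_nhds_iff_exists_Ioo_subset.1 (hclosed.isOpen_compl.mem_nhds hr)
  filter_upwards [Ioo_mem_nhds hl hh] with x hx
  have hsame : T ∩ Iic x = T ∩ Iic r := by
    ext s
    refine and_congr_right fun hs => ?_
    rcases le_or_gt s l with hsl | hls
    · exact iff_of_true (hsl.trans hx.1.le) (hsl.trans hl.le)
    · have hhs : h ≤ s := not_lt.1 fun hsh => hgap ⟨hls, hsh⟩ hs
      exact iff_of_false (not_le.2 (hx.2.trans_le hhs)) (not_le.2 (hh.trans_le hhs))
  simp only [tsFloor, hsame]

theorem continuousAt_tsFloor (hbdd : Bornology.IsBounded T) (ht : t ∈ T)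
    (hdense : ∀ z < t, ∃ y ∈ T, z < y ∧ y < t) : ContinuousAt (tsFloor T) t := by
  rw [ContinuousAt, tsFloor_of_mem hbdd ht]
  refine tendsto_order.2 ⟨fun l hl => ?_, fun h hh => ?_⟩
  · obtain ⟨y, hy, hly, hyt⟩ := hdense l hl
    filter_upwards [Ioi_mem_nhds hyt] with x hx using hly.trans_le (le_tsFloor hbdd hy hx.le)
  · obtain ⟨y, hy, -, hyt⟩ := hdense (t - 1) (by linarith)
    filter_upwards [Ioo_mem_nhds ((csInf_le hbdd.bddBelow hy).trans_lt hyt) hh] with x hx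
    exact (tsFloor_le hx.1.le).trans_lt hx.2

end Floor

def tsScattered (T : Set ℝ) : Set ℝ :=
  {x | x ∈ T ∧ ∃ z, x < z ∧ ∀ y ∈ T, x < y → z ≤ y} ∪
    {x | x ∈ T ∧ ∃ z < x, ∀ y ∈ T, y < x → y ≤ z}

theorem countable_tsScattered (T : Set ℝ) : (tsScattered T).Countable :=
  (countable_image_lt_image_Ioi_within T id).union (countable_image_lt_image_Iio_within T id)

section StepExtension

variable {E : Type*} [NormedAddCommGroup E] [NormedSpace ℝ E] {T : Set ℝ} {u : ℝ → E}

theorem RdContinuous.continuousAt_comp_tsFloor (hclosed : IsClosed T)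
    (hbdd : Bornology.IsBounded T) (hu : RdContinuous T u) {r : ℝ} (hr : r ∉ tsScattered T) :
    ContinuousAt (u ∘ tsFloor T) r := by
  by_cases hrT : r ∈ T
  · have hσ : tsSigma T r = r := by
      refine (le_tsSigma hclosed hbdd hrT).antisymm' (not_lt.1 fun hlt => hr (Or.inl ?_))
      exact ⟨hrT, _, hlt, fun y hy hry => tsSigma_le_of_lt hbdd hy hry⟩
    have hdense : ∀ z < r, ∃ y ∈ T, z < y ∧ y < r := by
      intro z hzr
      by_contra! hgap
      exact hr <| Or.inr
        ⟨hrT, z, hzr, fun y hy hyr => not_lt.1 fun hzy => (hgap y hy hzy).not_gt hyr⟩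
    have hu_r := hu.1 r hrT hσ
    rw [← tsFloor_of_mem hbdd hrT] at hu_r
    exact (continuousWithinAt_univ _ _).1 <|
      hu_r.comp (continuousAt_tsFloor hbdd hrT hdense).continuousWithinAt
        fun x _ => tsFloor_mem hclosed hbdd ⟨r, hrT⟩ x
  · exact ((tsFloor_eventuallyEq hclosed hrT).fun_comp u).continuousAt

theorem RdContinuous.aestronglyMeasurable_comp_tsFloor (hclosed : IsClosed T)
    (hbdd : Bornology.IsBounded T) (hu : RdContinuous T u) :
    AEStronglyMeasurable (u ∘ tsFloor T) volume := by
  have hcount := countable_tsScattered T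
  have hcont : ContinuousOn (u ∘ tsFloor T) (tsScattered T)ᶜ := fun _ hr =>
    (hu.continuousAt_comp_tsFloor hclosed hbdd hr).continuousWithinAt
  have := hcont.aestronglyMeasurable (μ := volume) hcount.measurableSet.compl
  rwa [Measure.restrict_eq_self_of_ae_mem (s := (tsScattered T)ᶜ) (hcount.ae_notMem volume)] at this

theorem RdContinuous.isBounded_image (hclosed : IsClosed T) (hbdd : Bornology.IsBounded T)
    (hu : RdContinuous T u) : Bornology.IsBounded (u '' T) := by
  refine (Metric.isCompact_of_isClosed_isBounded hclosed hbdd).induction_on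
    (p := fun s => Bornology.IsBounded (u '' s)) (by simp)
    (fun s t hst ht => ht.subset (image_mono hst))
    (fun s t hs ht => by simpa only [image_union] using hs.union ht) fun x hx => ?_
  obtain ⟨V₁, hV₁, hb₁⟩ : ∃ V ∈ 𝓝[T ∩ Ici x] x, Bornology.IsBounded (u '' V) := by
    rcases (le_tsSigma hclosed hbdd hx).eq_or_lt with hσ | hσ
    · exact Metric.exists_isBounded_image_of_tendsto
        ((hu.1 x hx hσ.symm).mono inter_subset_left)
    · refine ⟨T ∩ Ici x ∩ Iio (tsSigma T x),
        inter_mem self_mem_nhdsWithin (mem_nhdsWithin_of_mem_nhds (Iio_mem_nhds hσ)),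
        (Bornology.isBounded_singleton (x := u x)).subset ?_⟩
      rintro _ ⟨y, ⟨⟨hy, hxy⟩, hyσ⟩, rfl⟩
      obtain rfl : y = x := (hxy.eq_or_lt.resolve_right
        fun h => (tsSigma_le_of_lt hbdd hy h).not_gt hyσ).symm
      rfl
  obtain ⟨V₂, hV₂, hb₂⟩ : ∃ V ∈ 𝓝[T ∩ Iio x] x, Bornology.IsBounded (u '' V) := by
    by_cases hρ : tsRho T x = x
    · obtain ⟨L, hL⟩ := hu.2 x hx hρ
      exact Metric.exists_isBounded_image_of_tendsto hL
    · refine ⟨∅, mem_nhdsWithin.2 ⟨Ioi (tsRho T x), isOpen_Ioi,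
        (tsRho_le hbdd hx).lt_of_ne hρ, fun y hy => ?_⟩, by simp⟩
      exact (le_tsRho hbdd hy.2.1 hy.2.2).not_gt hy.1
  have hsplit : T = T ∩ Ici x ∪ T ∩ Iio x := by
    rw [← inter_union_distrib_left, Ici_union_Iio, inter_univ]
  refine ⟨V₁ ∪ V₂, ?_, by simpa only [image_union] using hb₁.union hb₂⟩
  rw [hsplit, nhdsWithin_union]
  exact union_mem_sup hV₁ hV₂

theorem RdContinuous.intervalIntegrable_comp_tsFloor (hclosed : IsClosed T)
    (hbdd : Bornology.IsBounded T) (hne : T.Nonempty) (hu : RdContinuous T u) (x y : ℝ) :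
    IntervalIntegrable (u ∘ tsFloor T) volume x y := by
  obtain ⟨M, hM⟩ := (hu.isBounded_image hclosed hbdd).exists_norm_le
  refine IntegrableOn.intervalIntegrable (Measure.integrableOn_of_bounded (M := M)
    measure_Icc_lt_top.ne (hu.aestronglyMeasurable_comp_tsFloor hclosed hbdd) ?_)
  exact ae_of_all _ fun r => hM _ (mem_image_of_mem u (tsFloor_mem hclosed hbdd hne r))

end StepExtension

theorem norm_slope_primitive_sub_le {E : Type*} [NormedAddCommGroup E] [NormedSpace ℝ E]
    [CompleteSpace E] {f : ℝ → E} {c : E} {a s t ε : ℝ}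
    (hf : ∀ x y, IntervalIntegrable f volume x y) (hst : s ≠ t)
    (hε : ∀ᵐ z, z ∈ uIoc s t → ‖f z - c‖ ≤ ε) :
    ‖slope (fun x => ∫ y in a..x, f y) s t - c‖ ≤ ε := by
  have hts : t - s ≠ 0 := sub_ne_zero.2 hst.symm
  have hslope : slope (fun x => ∫ y in a..x, f y) s t - c = (t - s)⁻¹ • ∫ z in s..t, (f z - c) := by
    rw [slope_def_module, intervalIntegral.integral_interval_sub_left (hf a t) (hf a s),
      intervalIntegral.integral_sub (hf s t) intervalIntegrable_const,
      intervalIntegral.integral_const, smul_sub, inv_smul_smul₀ hts]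
  rw [hslope, norm_smul, norm_inv, Real.norm_eq_abs]
  calc |t - s|⁻¹ * ‖∫ z in s..t, (f z - c)‖ ≤ |t - s|⁻¹ * (ε * |t - s|) := by
        gcongr
        exact intervalIntegral.norm_integral_le_of_norm_le_const_ae hε
    _ = ε := by field_simp

noncomputable def deltaPrimitive {E : Type*} [NormedAddCommGroup E] [NormedSpace ℝ E]
    (T : Set ℝ) (u : ℝ → E) (t : ℝ) : E :=
  ∫ s in sInf T..t, u (tsFloor T s)

theorem RdContinuous.hasDeltaDerivAt_deltaPrimitive {E : Type*} [NormedAddCommGroup E]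
    [NormedSpace ℝ E] [CompleteSpace E] {T : Set ℝ} {u : ℝ → E} {t : ℝ} (hclosed : IsClosed T)
    (hbdd : Bornology.IsBounded T) (hu : RdContinuous T u) (ht : t ∈ T) :
    HasDeltaDerivAt T (deltaPrimitive T u) t (u t) := by
  have hint := hu.intervalIntegrable_comp_tsFloor hclosed hbdd ⟨t, ht⟩
  rw [hasDeltaDerivAt_iff_tendsto_slope]
  rcases (le_tsSigma hclosed hbdd ht).eq_or_lt with hσ | hσ
  · rw [← hσ]
    refine Metric.tendsto_nhdsWithin_nhds.2 fun ε hε => ?_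
    obtain ⟨δ, hδ, hu_δ⟩ :=
      Metric.continuousWithinAt_iff.1 (hu.1 t ht hσ.symm) (ε / 2) (half_pos hε)
    refine ⟨δ, hδ, fun {s} hs hst => ?_⟩
    rw [dist_eq_norm]
    refine (norm_slope_primitive_sub_le hint hs.2 (ae_of_all _ fun z hz => ?_)).trans_lt
      (half_lt_self hε)
    have hz' := tsFloor_mem_uIcc hbdd hs.1 ht (uIoc_subset_uIcc hz)
    have hdist : dist (tsFloor T z) t < δ := by
      rw [Real.dist_eq, abs_sub_comm]
      rw [Real.dist_eq, abs_sub_comm] at hst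
      exact (abs_sub_right_of_mem_uIcc hz').trans_lt hst
    rw [← dist_eq_norm]
    exact (hu_δ (tsFloor_mem hclosed hbdd ⟨t, ht⟩ z) hdist).le
  · have hσt : tsSigma T t - t ≠ 0 := sub_ne_zero.2 hσ.ne'
    have hcont : ContinuousAt (fun s => slope (deltaPrimitive T u) s (tsSigma T t)) t := by
      simp only [slope_def_module]
      have := (intervalIntegral.continuous_primitive hint (sInf T)).continuousAt (x := t)
      exact ((continuousAt_const.sub continuousAt_id).inv₀ hσt).smul (continuousAt_const.sub this)
    have hgap : slope (deltaPrimitive T u) t (tsSigma T t) = u t := by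
      refine sub_eq_zero.1 (norm_le_zero_iff.1 (norm_slope_primitive_sub_le hint hσ.ne ?_))
      filter_upwards [(countable_singleton (tsSigma T t)).ae_notMem volume] with z hzσ hz
      rw [uIoc_of_le hσ.le] at hz
      simp [tsFloor_eq_of_mem_Ico hclosed hbdd ht ⟨hz.1.le, hz.2.lt_of_ne hzσ⟩]
    exact hgap ▸ hcont.tendsto.mono_left nhdsWithin_le_nhds

theorem timeScale_induction {T : Set ℝ} (hclosed : IsClosed T) (hbdd : Bornology.IsBounded T)
    {p : ℝ → Prop} (start : p (sInf T))
    (right_scattered : ∀ t ∈ T, t < tsSigma T t → p t → p (tsSigma T t))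
    (right_dense : ∀ t ∈ T, t < sSup T → tsSigma T t = t → p t → ∀ᶠ s in 𝓝[>] t, s ∈ T → p s)
    (left_dense : ∀ t ∈ T, t ∈ closure (T ∩ Iio t) → (∀ s ∈ T, s < t → p s) → p t) :
    ∀ t ∈ T, p t := by
  intro t ht
  set S := {x | x ∈ T ∧ ∀ s ∈ T, s ≤ x → p s}
  have haS : sInf T ∈ S := ⟨hclosed.csInf_mem ⟨t, ht⟩ hbdd.bddBelow, fun s hs hsa =>
    (hsa.antisymm (csInf_le hbdd.bddBelow hs)) ▸ start⟩
  have hSbdd : BddAbove S := hbdd.bddAbove.mono fun _ hx => hx.1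
  have hcl : sSup S ∈ closure S := csSup_mem_closure ⟨_, haS⟩ hSbdd
  set c := sSup S
  have hcT : c ∈ T := hclosed.closure_subset_iff.2 (fun _ hx => hx.1) hcl
  have hbelow : ∀ s ∈ T, s < c → p s := fun s hs hsc =>
    let ⟨_, hx, hsx⟩ := exists_lt_of_lt_csSup ⟨_, haS⟩ hsc
    hx.2 s hs hsx.le
  have hcS : c ∈ S := by
    by_contra hcS
    have hS : S ⊆ T ∩ Iio c := fun x hx =>
      ⟨hx.1, (le_csSup hSbdd hx).lt_of_ne (by rintro rfl; exact hcS hx)⟩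
    refine hcS ⟨hcT, fun s hs hsc => ?_⟩
    rcases hsc.lt_or_eq with hsc | rfl
    · exact hbelow s hs hsc
    · exact left_dense _ hcT (closure_mono hS hcl) hbelow
  have hmax : ∀ y ∈ T, c < y → (∀ s ∈ T, c < s → s ≤ y → p s) → False := fun y hy hcy hp =>
    (le_csSup hSbdd ⟨hy, fun s hs hsy =>
      (le_or_gt s c).elim (hcS.2 s hs) fun hcs => hp s hs hcs hsy⟩).not_gt hcy
  have hcb : sSup T ≤ c := by
    refine not_lt.1 fun hcb => ?_
    rcases (le_tsSigma hclosed hbdd hcT).eq_or_lt with hσ | hσ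
    · obtain ⟨h, hch, hsub⟩ := mem_nhdsGT_iff_exists_Ioo_subset.1
        (right_dense c hcT hcb hσ.symm (hcS.2 c hcT le_rfl))
      obtain ⟨y, hy, hcy, hyh⟩ := exists_mem_Ioo_of_tsSigma_eq hclosed hbdd hcT hcb hσ.symm hch
      exact hmax y hy hcy fun s hs hcs hsy => hsub ⟨hcs, hsy.trans_lt hyh⟩ hs
    · refine hmax _ (tsSigma_mem hclosed hbdd ⟨t, ht⟩) hσ fun s hs hcs hsσ => ?_
      obtain rfl : s = tsSigma T c := hsσ.antisymm (tsSigma_le_of_lt hbdd hs hcs)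
      exact right_scattered c hcT hσ (hcS.2 c hcT le_rfl)
  exact hcS.2 t ht ((le_csSup hbdd.bddAbove ht).trans hcb)

section Uniqueness

variable {E : Type*} [NormedAddCommGroup E] [NormedSpace ℝ E] {T : Set ℝ} {W : ℝ → E}

theorem norm_le_mul_of_hasDeltaDerivAt_zero (hclosed : IsClosed T) (hbdd : Bornology.IsBounded T)
    (hW0 : W (sInf T) = 0) (hW : ∀ t ∈ tsK T, HasDeltaDerivAt T W t 0) {ε : ℝ} (hε : 0 < ε) :
    ∀ t ∈ T, ‖W t‖ ≤ ε * (t - sInf T) := by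
  refine timeScale_induction hclosed hbdd (by simp [hW0]) (fun t ht hσ hWt => ?_)
    (fun t ht htb hσ hWt => ?_) fun t ht hcl hbelow => ?_
  · have hslope := (hW t (mem_tsK_of_lt hbdd ht (lt_sSup_of_lt_tsSigma hσ))).slope_eq ht hσ
    have hjump : W (tsSigma T t) = W t := by
      simpa [hslope, sub_eq_zero] using (sub_smul_slope W t (tsSigma T t)).symm
    rw [hjump]
    exact hWt.trans (by gcongr)
  · have h := hasDeltaDerivAt_iff_tendsto_slope.1 (hW t (mem_tsK_of_lt hbdd ht htb))
    rw [hσ] at h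
    have hsmall : ∀ᶠ s in 𝓝[T \ {t}] t, ‖slope W s t‖ < ε :=
      h.norm.eventually (gt_mem_nhds (by simpa using hε))
    rw [eventually_nhdsWithin_iff] at hsmall
    filter_upwards [eventually_nhdsWithin_of_eventually_nhds hsmall, self_mem_nhdsWithin]
      with s hs hts hsT
    calc ‖W s‖ = ‖W t + (s - t) • slope W t s‖ := by
          rw [sub_smul_slope, vsub_eq_sub, add_sub_cancel]
      _ ≤ ‖W t‖ + ‖(s - t) • slope W s t‖ := by rw [slope_comm]; exact norm_add_le _ _
      _ = ‖W t‖ + (s - t) * ‖slope W s t‖ := by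
          rw [norm_smul, Real.norm_of_nonneg (sub_nonneg.2 (le_of_lt hts))]
      _ ≤ ε * (t - sInf T) + (s - t) * ε := by
          gcongr
          · exact sub_nonneg.2 (le_of_lt hts)
          · exact (hs ⟨hsT, (ne_of_lt hts).symm⟩).le
      _ = ε * (s - sInf T) := by ring
  · have hcont := (hW t (mem_tsK_of_mem_closure hbdd ht hcl)).continuousWithinAt hclosed hbdd ht
    exact ContinuousWithinAt.closure_le hcl (hcont.norm.mono inter_subset_left)
      (by fun_prop) fun s hs => hbelow s hs.1 hs.2

theorem eq_zero_of_hasDeltaDerivAt_zero (hclosed : IsClosed T) (hbdd : Bornology.IsBounded T)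
    (hW0 : W (sInf T) = 0) (hW : ∀ t ∈ tsK T, HasDeltaDerivAt T W t 0) : ∀ t ∈ T, W t = 0 := by
  intro t ht
  have hlim : Tendsto (fun ε : ℝ => ε * (t - sInf T)) (𝓝[>] 0) (𝓝 0) := by
    simpa using ((tendsto_id (x := 𝓝 (0 : ℝ))).mul_const (t - sInf T)).mono_left
      nhdsWithin_le_nhds
  exact norm_le_zero_iff.1 <| ge_of_tendsto hlim <| eventually_nhdsWithin_of_forall fun ε hε =>
    norm_le_mul_of_hasDeltaDerivAt_zero hclosed hbdd hW0 hW hε t ht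

end Uniqueness

theorem exists_unique_cauchy_delta_antiderivative_general
    (T : Set ℝ) (hclosed : IsClosed T) (hbdd : Bornology.IsBounded T)
    (n : ℕ) (u : ℝ → EuclideanSpace ℝ (Fin n)) (hu : RdContinuous T u) :
    ∃ U : ℝ → EuclideanSpace ℝ (Fin n),
      (U (sInf T) = 0 ∧ ∀ t ∈ tsK T, HasDeltaDerivAt T U t (u t)) ∧
      ∀ V : ℝ → EuclideanSpace ℝ (Fin n),
        (V (sInf T) = 0 ∧ ∀ t ∈ tsK T, HasDeltaDerivAt T V t (u t)) →
        ∀ t ∈ T, V t = U t := by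
  have hU : ∀ t ∈ T, HasDeltaDerivAt T (deltaPrimitive T u) t (u t) := fun t ht =>
    hu.hasDeltaDerivAt_deltaPrimitive hclosed hbdd ht
  refine ⟨deltaPrimitive T u, ⟨intervalIntegral.integral_same, fun t ht => hU t ht.1⟩, ?_⟩
  rintro V ⟨hV0, hV⟩ t ht
  refine sub_eq_zero.1 (eq_zero_of_hasDeltaDerivAt_zero hclosed hbdd (W := V - deltaPrimitive T u)
    ?_ (fun s hs => ?_) t ht)
  · simp [hV0, deltaPrimitive]
  · simpa using (hV s hs).sub (hU s hs.1)

theorem exists_unique_cauchy_delta_antiderivative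
    (T : Set ℝ) (hclosed : IsClosed T) (hbdd : Bornology.IsBounded T)
    (hcard : 3 ≤ T.ncard)
    (n : ℕ) (u : ℝ → EuclideanSpace ℝ (Fin n)) (hu : RdContinuous T u) :
    ∃ U : ℝ → EuclideanSpace ℝ (Fin n),
      (U (sInf T) = 0 ∧ ∀ t ∈ tsK T, HasDeltaDerivAt T U t (u t)) ∧
      ∀ V : ℝ → EuclideanSpace ℝ (Fin n),
        (V (sInf T) = 0 ∧ ∀ t ∈ tsK T, HasDeltaDerivAt T V t (u t)) →
        ∀ t ∈ T, V t = U t :=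
  exists_unique_cauchy_delta_antiderivative_general T hclosed hbdd n u hu
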